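/- arXiv:2308.01739 — 5 statements merged into one kernel-verified Lean document; each statement's English description precedes it below -/
import Mathlib

section
/- Let (p_j)_{j≥1} be a sequence of positive reals summing to 1 and define Φ_r(t) = (t^r/r!) ∑_j e^{-t p_j} p_j^r for r ≥ 1 and t ≥ 0. Then for all integers 1 ≤ r ≤ s, all γ ∈ [0,1], and all t ≥ 0: Φ_r(γt) ≥ C(s,r) γ^r (1-γ)^{s-r} Φ_s(t), where C(s,r) is the binomial coefficient. -/
/-- Expected number of boxes containing exactly `r` balls at time `t` in the
Poissonised occupancy scheme with frequencies `p`. -/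
noncomputable def Phi (p : ℕ → ℝ) (r : ℕ) (t : ℝ) : ℝ :=
  t ^ r / (Nat.factorial r) * ∑' j, Real.exp (-t * p j) * p j ^ r

private lemma pow_div_factorial_le_exp {y : ℝ} (hy : 0 ≤ y) (k : ℕ) :
    y ^ k / k.factorial ≤ Real.exp y := by
  calc y ^ k / k.factorial ≤ ∑ i ∈ Finset.range (k + 1), y ^ i / i.factorial := by
        refine Finset.single_le_sum (f := fun i => y ^ i / (i.factorial : ℝ)) ?_ ?_
        · intro i _
          positivity
        · simp
    _ ≤ Real.exp y := Real.sum_le_exp_of_nonneg hy _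

private lemma key_pointwise (r k : ℕ) {γ x : ℝ} (hγ0 : 0 ≤ γ) (hγ1 : γ ≤ 1) (hx : 0 ≤ x) :
    ((r + k).choose r : ℝ) * γ ^ r * (1 - γ) ^ k *
      (Real.exp (-x) * x ^ (r + k) / (r + k).factorial) ≤
    Real.exp (-(γ * x)) * (γ * x) ^ r / r.factorial := by
  have h1γ : 0 ≤ 1 - γ := by linarith
  have hC : ((r + k).choose r : ℝ) * r.factorial * k.factorial = (r + k).factorial := by
    have h0 := Nat.choose_mul_factorial_mul_factorial (Nat.le_add_right r k)
    rw [Nat.add_sub_cancel_left] at h0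
    exact_mod_cast congrArg (Nat.cast : ℕ → ℝ) h0
  have hexp : Real.exp (-x) = Real.exp (-(γ * x)) * Real.exp (-((1 - γ) * x)) := by
    rw [← Real.exp_add]; ring_nf
  have hB : Real.exp (-((1 - γ) * x)) * (((1 - γ) * x) ^ k / k.factorial) ≤ 1 := by
    have hy : 0 ≤ (1 - γ) * x := mul_nonneg h1γ hx
    calc Real.exp (-((1 - γ) * x)) * (((1 - γ) * x) ^ k / k.factorial)
        ≤ Real.exp (-((1 - γ) * x)) * Real.exp ((1 - γ) * x) :=
          mul_le_mul_of_nonneg_left (pow_div_factorial_le_exp hy k) (Real.exp_pos _).le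
      _ = 1 := by rw [← Real.exp_add]; simp
  have hA : 0 ≤ Real.exp (-(γ * x)) * (γ * x) ^ r / r.factorial := by positivity
  have hEq : ((r + k).choose r : ℝ) * γ ^ r * (1 - γ) ^ k *
      (Real.exp (-x) * x ^ (r + k) / (r + k).factorial) =
      (Real.exp (-(γ * x)) * (γ * x) ^ r / r.factorial) *
      (Real.exp (-((1 - γ) * x)) * (((1 - γ) * x) ^ k / k.factorial)) := by
    have h1 : (r.factorial : ℝ) ≠ 0 := by positivity
    have h2 : (k.factorial : ℝ) ≠ 0 := by positivity
    have h3 : ((r + k).factorial : ℝ) ≠ 0 := by positivity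
    have hC' : ((r + k).choose r : ℝ) = (r + k).factorial / (r.factorial * k.factorial) := by
      rw [eq_div_iff (by positivity)]
      linarith [hC]
    rw [hexp, hC']
    simp only [mul_pow]
    field_simp
    ring
  rw [hEq]
  calc (Real.exp (-(γ * x)) * (γ * x) ^ r / r.factorial) *
      (Real.exp (-((1 - γ) * x)) * (((1 - γ) * x) ^ k / k.factorial))
      ≤ (Real.exp (-(γ * x)) * (γ * x) ^ r / r.factorial) * 1 :=
        mul_le_mul_of_nonneg_left hB hA
    _ = _ := mul_one _

theorem stmt_1 (p : ℕ → ℝ) (hp : ∀ j, 0 < p j) (hsum : Summable p)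
    (h1 : ∑' j, p j = 1) (r s : ℕ) (hr : 1 ≤ r) (hrs : r ≤ s)
    (γ t : ℝ) (hγ0 : 0 ≤ γ) (hγ1 : γ ≤ 1) (ht : 0 ≤ t) :
    (s.choose r : ℝ) * γ ^ r * (1 - γ) ^ (s - r) * Phi p s t ≤ Phi p r (γ * t) := by
  have hple : ∀ j, p j ≤ 1 := by
    intro j
    rw [← h1]
    exact Summable.le_tsum hsum j fun i _ => (hp i).le
  have hsumm : ∀ (c u : ℝ) (m : ℕ), 0 ≤ c → 0 ≤ u → 1 ≤ m →
      Summable (fun j => c * (Real.exp (-u * p j) * p j ^ m)) := by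
    intro c u m hc hu hm
    refine Summable.of_nonneg_of_le (f := fun j => c * p j)
      (fun j => mul_nonneg hc (mul_nonneg (Real.exp_pos _).le (pow_nonneg (hp j).le m)))
      (fun j => ?_) (hsum.mul_left c)
    · 
      have he : Real.exp (-u * p j) ≤ 1 := by
        apply Real.exp_le_one_iff.mpr
        have := (hp j).le
        nlinarith
      have hpw : p j ^ m ≤ p j := by
        calc p j ^ m ≤ p j ^ 1 := pow_le_pow_of_le_one (hp j).le (hple j) hm
          _ = p j := pow_one _
      have hle : Real.exp (-u * p j) * p j ^ m ≤ p j := by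
        calc Real.exp (-u * p j) * p j ^ m ≤ 1 * p j ^ m :=
              mul_le_mul_of_nonneg_right he (pow_nonneg (hp j).le m)
          _ = p j ^ m := one_mul _
          _ ≤ p j := hpw
      exact mul_le_mul_of_nonneg_left hle hc
  obtain ⟨k, rfl⟩ : ∃ k, s = r + k := ⟨s - r, by omega⟩
  rw [Nat.add_sub_cancel_left]
  set cL : ℝ := ((r + k).choose r : ℝ) * γ ^ r * (1 - γ) ^ k * (t ^ (r + k) / (r + k).factorial)
    with hcL
  set cR : ℝ := (γ * t) ^ r / r.factorial with hcR
  have hcL0 : 0 ≤ cL := by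
    have h1γ : 0 ≤ 1 - γ := by linarith
    positivity
  have hcR0 : 0 ≤ cR := by positivity
  have hL : ((r + k).choose r : ℝ) * γ ^ r * (1 - γ) ^ k * Phi p (r + k) t =
      ∑' j, cL * (Real.exp (-t * p j) * p j ^ (r + k)) := by
    rw [tsum_mul_left, Phi, hcL]; ring
  have hR : Phi p r (γ * t) = ∑' j, cR * (Real.exp (-(γ * t) * p j) * p j ^ r) := by
    rw [tsum_mul_left, Phi, hcR]
  rw [hL, hR]
  refine Summable.tsum_le_tsum ?_ (hsumm cL t (r + k) hcL0 ht (by omega))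
    (hsumm cR (γ * t) r hcR0 (mul_nonneg hγ0 ht) hr)
  intro j
  have hx : 0 ≤ t * p j := mul_nonneg ht (hp j).le
  have hkey := key_pointwise r k hγ0 hγ1 hx
  have e1 : cL * (Real.exp (-t * p j) * p j ^ (r + k)) =
      ((r + k).choose r : ℝ) * γ ^ r * (1 - γ) ^ k *
        (Real.exp (-(t * p j)) * (t * p j) ^ (r + k) / (r + k).factorial) := by
    rw [hcL, mul_pow, neg_mul]; ring
  have e2 : Real.exp (-(γ * (t * p j))) * (γ * (t * p j)) ^ r / r.factorial =
      cR * (Real.exp (-(γ * t) * p j) * p j ^ r) := by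
    rw [hcR, show γ * (t * p j) = (γ * t) * p j by ring, mul_pow, neg_mul]; ring
  rw [e1, ← e2]
  exact hkey
end

section
/- Let (p_j)_{j≥1} be positive reals summing to 1 and Φ_r(t) = (t^r/r!) ∑_j e^{-t p_j} p_j^r. Then for all γ ∈ [0,1] and t ≥ 0: Φ_r(γt) ≤ γ^r (t^r/r!)^{1-γ} Φ_r(t)^γ. -/
/-!
Write `Φ_r(t) = (t^r / r!) L(t)` with `L(t) = ∑_j e^{-t p_j} p_j^r`, the Laplace transform of the
measure `∑_j p_j^r δ_{p_j}`, whose mass is at most `∑_j p_j = 1`. Since `e^{-γ t p} = (e^{-t p})^γ`,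
Hölder's inequality with exponents `1/γ` and `1/(1-γ)` gives `L(γ t) ≤ L(t)^γ · (mass)^{1-γ} ≤ L(t)^γ`,
and the prefactor `(γ t)^r / r! = γ^r (t^r/r!)^{1-γ} (t^r/r!)^γ` accounts for the rest.
-/

open Real

theorem tsum_mul_rpow_le_of_nonneg {ι : Type*} {w a : ι → ℝ} (hw : ∀ i, 0 ≤ w i)
    (ha : ∀ i, 0 ≤ a i) (hw_sum : Summable w) (hwa_sum : Summable fun i => w i * a i)
    {γ : ℝ} (hγ0 : 0 ≤ γ) (hγ1 : γ ≤ 1) :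
    ∑' i, w i * a i ^ γ ≤ (∑' i, w i * a i) ^ γ * (∑' i, w i) ^ (1 - γ) := by
  rcases hγ0.eq_or_lt with rfl | hγpos
  · simp
  rcases hγ1.eq_or_lt with rfl | hγlt
  · simp
  have hconj : γ⁻¹.HolderConjugate (1 - γ)⁻¹ :=
    Real.holderConjugate_iff.mpr ⟨(one_lt_inv₀ hγpos).mpr hγlt, by rw [inv_inv, inv_inv]; ring⟩
  have hsplit : ∀ i, w i * a i ^ γ = (w i * a i) ^ γ * w i ^ (1 - γ) := fun i => by
    rw [mul_rpow (hw i) (ha i), mul_right_comm,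
      ← rpow_add' (hw i) (by norm_num : γ + (1 - γ) ≠ 0), add_sub_cancel, rpow_one]
  have hholder := inner_le_Lp_mul_Lq_tsum_of_nonneg hconj
    (fun i => rpow_nonneg (mul_nonneg (hw i) (ha i)) γ) (fun i => rpow_nonneg (hw i) (1 - γ))
    (by simpa only [rpow_rpow_inv (mul_nonneg (hw _) (ha _)) hγpos.ne'] using hwa_sum)
    (by simpa only [rpow_rpow_inv (hw _) (sub_pos.mpr hγlt).ne'] using hw_sum)
  simpa only [← hsplit, rpow_rpow_inv (mul_nonneg (hw _) (ha _)) hγpos.ne',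
    rpow_rpow_inv (hw _) (sub_pos.mpr hγlt).ne', one_div, inv_inv] using hholder

theorem tsum_exp_mul_le_rpow {ι : Type*} {x w : ι → ℝ} (hx : ∀ i, 0 ≤ x i) (hw : ∀ i, 0 ≤ w i)
    (hw_sum : Summable w) (hw_le : ∑' i, w i ≤ 1) {γ t : ℝ} (hγ0 : 0 ≤ γ) (hγ1 : γ ≤ 1)
    (ht : 0 ≤ t) :
    ∑' i, exp (-(γ * t) * x i) * w i ≤ (∑' i, exp (-t * x i) * w i) ^ γ := by
  have hexp_le : ∀ i, exp (-t * x i) ≤ 1 := fun i =>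
    exp_le_one_iff.mpr (by nlinarith [hx i])
  have hsum : Summable fun i => w i * exp (-t * x i) :=
    hw_sum.of_nonneg_of_le (fun i => mul_nonneg (hw i) (exp_pos _).le)
      (fun i => mul_le_of_le_one_right (hw i) (hexp_le i))
  have hexp_rpow : ∀ i, exp (-(γ * t) * x i) = exp (-t * x i) ^ γ := fun i => by
    rw [← exp_mul]; ring_nf
  calc ∑' i, exp (-(γ * t) * x i) * w i
      = ∑' i, w i * exp (-t * x i) ^ γ :=
        tsum_congr fun i => by rw [hexp_rpow, mul_comm]
    _ ≤ (∑' i, w i * exp (-t * x i)) ^ γ * (∑' i, w i) ^ (1 - γ) :=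
        tsum_mul_rpow_le_of_nonneg hw (fun i => (exp_pos _).le) hw_sum hsum hγ0 hγ1
    _ ≤ (∑' i, w i * exp (-t * x i)) ^ γ * 1 := by
        gcongr
        · exact rpow_nonneg (tsum_nonneg fun i => mul_nonneg (hw i) (exp_pos _).le) γ
        · exact rpow_le_one (tsum_nonneg hw) hw_le (by linarith)
    _ = (∑' i, exp (-t * x i) * w i) ^ γ := by simp_rw [mul_one, mul_comm (w _)]

theorem summable_pow_and_tsum_pow_le_one {ι : Type*} {p : ι → ℝ} (hp : ∀ i, 0 ≤ p i)
    (hsum : Summable p) (h1 : ∑' i, p i = 1) {r : ℕ} (hr : r ≠ 0) :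
    Summable (fun i => p i ^ r) ∧ ∑' i, p i ^ r ≤ 1 := by
  have hpow_le : ∀ i, p i ^ r ≤ p i := fun i =>
    pow_le_of_le_one (hp i) (h1 ▸ hsum.le_tsum i fun j _ => hp j) hr
  have hpow_sum : Summable fun i => p i ^ r :=
    hsum.of_nonneg_of_le (fun i => pow_nonneg (hp i) r) hpow_le
  exact ⟨hpow_sum, h1 ▸ hpow_sum.tsum_le_tsum hpow_le hsum⟩

theorem stmt_2 (p : ℕ → ℝ) (hp : ∀ j, 0 < p j) (hsum : Summable p)
    (h1 : ∑' j, p j = 1) (r : ℕ) (hr : 1 ≤ r)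
    (γ t : ℝ) (hγ0 : 0 ≤ γ) (hγ1 : γ ≤ 1) (ht : 0 ≤ t) :
    Phi p r (γ * t) ≤ γ ^ r * (t ^ r / (Nat.factorial r)) ^ ((1 : ℝ) - γ) * Phi p r t ^ γ := by
  set c : ℝ := t ^ r / (Nat.factorial r)
  have hc : 0 ≤ c := by positivity
  obtain ⟨hw_sum, hw_le⟩ :=
    summable_pow_and_tsum_pow_le_one (fun j => (hp j).le) hsum h1 (by omega : r ≠ 0)
  have hlaplace := tsum_exp_mul_le_rpow (fun j => (hp j).le) (fun j => pow_nonneg (hp j).le r)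
    hw_sum hw_le hγ0 hγ1 ht
  have hc_split : c ^ ((1 : ℝ) - γ) * c ^ γ = c := by
    rw [← rpow_add' hc (by norm_num : (1 : ℝ) - γ + γ ≠ 0), sub_add_cancel, rpow_one]
  calc Phi p r (γ * t) = γ ^ r * c * ∑' j, exp (-(γ * t) * p j) * p j ^ r := by
        rw [Phi, mul_pow, mul_div_assoc]
    _ ≤ γ ^ r * c * (∑' j, exp (-t * p j) * p j ^ r) ^ γ := by gcongr
    _ = γ ^ r * (c ^ ((1 : ℝ) - γ) * c ^ γ) * (∑' j, exp (-t * p j) * p j ^ r) ^ γ := by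
        rw [hc_split]
    _ = γ ^ r * c ^ ((1 : ℝ) - γ) * Phi p r t ^ γ := by
        rw [Phi, mul_rpow hc (tsum_nonneg fun j => mul_nonneg (exp_pos _).le
          (pow_nonneg (hp j).le r))]
        ring
end

section
/- Let (p_j)_{j≥1} be positive reals summing to 1 and Φ_r(t) = (t^r/r!) ∑_j e^{-t p_j} p_j^r. Fix γ₂ > γ₁ > 1. Then for every γ ∈ [γ₁, γ₂] and t > 0: Φ_{r+1}(γt)/Φ_r(t) ≤ γ₂^{r+1}/((r+1)(γ₁-1)). -/
lemma phi_summable (p : ℕ → ℝ) (hp : ∀ j, 0 < p j) (hsum : Summable p)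
    (h1 : ∑' j, p j = 1) (r : ℕ) (hr : 1 ≤ r) (s : ℝ) (hs : 0 ≤ s) :
    Summable (fun j => Real.exp (-s * p j) * p j ^ r) := by
  apply Summable.of_nonneg_of_le
    (fun j => mul_nonneg (Real.exp_nonneg _) (pow_nonneg (hp j).le _)) (fun j => ?_) hsum
  have hle : p j ≤ 1 := by
    have := Summable.le_tsum hsum j (fun i _ => (hp i).le)
    linarith
  have h2 : Real.exp (-s * p j) ≤ 1 := by
    rw [Real.exp_le_one_iff]
    have := (hp j).le
    nlinarith
  have h3 : p j ^ r ≤ p j ^ 1 := pow_le_pow_of_le_one (hp j).le hle hr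
  calc Real.exp (-s * p j) * p j ^ r ≤ 1 * p j ^ 1 := by
        apply mul_le_mul h2 h3 (pow_nonneg (hp j).le _) (by norm_num)
    _ = p j := by ring

lemma key_ineq (r : ℕ) (γ₁ γ₂ γ X : ℝ) (hγ₁ : 1 < γ₁) (hl : γ₁ ≤ γ) (hu : γ ≤ γ₂)
    (hX : 0 < X) :
    γ ^ (r + 1) * (X * Real.exp (-((γ - 1) * X))) ≤ γ₂ ^ (r + 1) / (γ₁ - 1) := by
  have hγ : (0:ℝ) < γ := by linarith
  have hexp : (γ₁ - 1) * X ≤ Real.exp ((γ - 1) * X) := by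
    have h := Real.add_one_le_exp ((γ - 1) * X)
    nlinarith
  have hexppos : (0:ℝ) < Real.exp ((γ - 1) * X) := Real.exp_pos _
  have h1 : X * Real.exp (-((γ - 1) * X)) ≤ 1 / (γ₁ - 1) := by
    rw [Real.exp_neg, ← div_eq_mul_inv, div_le_div_iff₀ hexppos (by linarith)]
    nlinarith
  have h2 : γ ^ (r + 1) ≤ γ₂ ^ (r + 1) := pow_le_pow_left₀ hγ.le hu _
  calc γ ^ (r + 1) * (X * Real.exp (-((γ - 1) * X)))
      ≤ γ₂ ^ (r + 1) * (1 / (γ₁ - 1)) := by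
        apply mul_le_mul h2 h1 (by positivity) (pow_nonneg (by linarith) _)
    _ = γ₂ ^ (r + 1) / (γ₁ - 1) := by ring

theorem stmt_9 (p : ℕ → ℝ) (hp : ∀ j, 0 < p j) (hsum : Summable p)
    (h1 : ∑' j, p j = 1) (r : ℕ) (hr : 1 ≤ r)
    (γ₁ γ₂ : ℝ) (hγ₁ : 1 < γ₁) (hγ₁₂ : γ₁ < γ₂)
    (γ : ℝ) (hγ : γ ∈ Set.Icc γ₁ γ₂) (t : ℝ) (ht : 0 < t) :
    Phi p (r + 1) (γ * t) / Phi p r t ≤ γ₂ ^ (r + 1) / ((r + 1) * (γ₁ - 1)) := by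
  obtain ⟨hl, hu⟩ := hγ
  have hγpos : (0:ℝ) < γ := by linarith
  set C : ℝ := γ₂ ^ (r + 1) / ((r + 1) * (γ₁ - 1)) with hC
  have hSr : Summable (fun j => Real.exp (-t * p j) * p j ^ r) :=
    phi_summable p hp hsum h1 r hr t ht.le
  have hSr1 : Summable (fun j => Real.exp (-(γ * t) * p j) * p j ^ (r + 1)) :=
    phi_summable p hp hsum h1 (r + 1) (by omega) (γ * t) (mul_pos hγpos ht).le
  have htsum_pos : 0 < ∑' j, Real.exp (-t * p j) * p j ^ r := by
    exact Summable.tsum_pos hSr (fun j => mul_nonneg (Real.exp_nonneg _) (pow_nonneg (hp j).le _)) 0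
      (mul_pos (Real.exp_pos _) (pow_pos (hp 0) _))
  have hΦ : 0 < Phi p r t := by
    rw [Phi]
    have h2 : (0:ℝ) < t ^ r / (Nat.factorial r) := by positivity
    exact mul_pos h2 htsum_pos
  rw [div_le_iff₀ hΦ]
  have hpoint : ∀ j, (γ * t) ^ (r + 1) / (Nat.factorial (r + 1)) *
      (Real.exp (-(γ * t) * p j) * p j ^ (r + 1)) ≤
      (C * (t ^ r / (Nat.factorial r))) * (Real.exp (-t * p j) * p j ^ r) := by
    intro j
    have hx : 0 < p j := hp j
    have hX : 0 < t * p j := by positivity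
    have hkey := key_ineq r γ₁ γ₂ γ (t * p j) hγ₁ hl hu hX
    have hfac : (Nat.factorial (r + 1) : ℝ) = (r + 1) * Nat.factorial r := by
      push_cast [Nat.factorial_succ]; ring
    have hexp : Real.exp (-(γ * t) * p j) =
        Real.exp (-t * p j) * Real.exp (-((γ - 1) * (t * p j))) := by
      rw [← Real.exp_add]; ring_nf
    have hfacpos : (0:ℝ) < Nat.factorial r := by positivity
    have hrpos : (0:ℝ) < (r:ℝ) + 1 := by positivity
    have hE : 0 < Real.exp (-t * p j) := Real.exp_pos _
    rw [hfac, hexp]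
    have expand : (γ * t) ^ (r + 1) / ((↑r + 1) * ↑(Nat.factorial r)) *
        (Real.exp (-t * p j) * Real.exp (-((γ - 1) * (t * p j))) * p j ^ (r + 1)) =
        (t ^ r / (Nat.factorial r) * (Real.exp (-t * p j) * p j ^ r)) *
        (γ ^ (r + 1) * (t * p j * Real.exp (-((γ - 1) * (t * p j)))) / ((r:ℝ) + 1)) := by
      field_simp
      ring
    rw [expand]
    have hcc : γ ^ (r + 1) * (t * p j * Real.exp (-((γ - 1) * (t * p j)))) / ((r:ℝ) + 1)
        ≤ C := by
      rw [hC, div_le_div_iff₀ hrpos (mul_pos hrpos (by linarith))]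
      calc γ ^ (r + 1) * (t * p j * Real.exp (-((γ - 1) * (t * p j)))) * ((↑r + 1) * (γ₁ - 1))
          ≤ γ₂ ^ (r + 1) / (γ₁ - 1) * ((↑r + 1) * (γ₁ - 1)) := by
            apply mul_le_mul_of_nonneg_right hkey (by nlinarith)
        _ = γ₂ ^ (r + 1) * (↑r + 1) := by
            have hne : γ₁ - 1 ≠ 0 := by linarith
            field_simp
    calc (t ^ r / (Nat.factorial r) * (Real.exp (-t * p j) * p j ^ r)) *
          (γ ^ (r + 1) * (t * p j * Real.exp (-((γ - 1) * (t * p j)))) / ((r:ℝ) + 1))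
        ≤ (t ^ r / (Nat.factorial r) * (Real.exp (-t * p j) * p j ^ r)) * C := by
          apply mul_le_mul_of_nonneg_left hcc (by positivity)
      _ = (C * (t ^ r / (Nat.factorial r))) * (Real.exp (-t * p j) * p j ^ r) := by ring
  calc Phi p (r + 1) (γ * t)
      = ∑' j, (γ * t) ^ (r + 1) / (Nat.factorial (r + 1)) *
          (Real.exp (-(γ * t) * p j) * p j ^ (r + 1)) := by
        rw [Phi, tsum_mul_left]
    _ ≤ ∑' j, (C * (t ^ r / (Nat.factorial r))) * (Real.exp (-t * p j) * p j ^ r) :=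
        Summable.tsum_le_tsum hpoint (hSr1.mul_left _) (hSr.mul_left _)
    _ = C * Phi p r t := by rw [tsum_mul_left, Phi]; ring
end

section
/- Let (p_j)_{j≥1} be positive reals summing to 1, Φ_r(t) = (t^r/r!) ∑_j e^{-t p_j} p_j^r. Suppose Φ_r(t) = g(t) log t with g(t) → ∞ as t → ∞. Then Φ_{r+1}(t)/Φ_r(t)² → 0 as t → ∞. -/
/-!
Splitting `e^{-tp} = e^{-γtp} e^{-(1-γ)tp}` and using `x e^{-cx} ≤ 1/c` gives
`Φ_{r+1}(t) ≤ Φ_r(γt) / ((r+1) γ^r (1-γ))`, while Hölder's inequality with exponents `1/γ` and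
`1/(1-γ)`, against the weights `p_j^r` of total mass at most `1`, gives
`Φ_r(γt) ≤ γ^r (t^r/r!)^{1-γ} Φ_r(t)^γ`. For `γ = 1 - 1/log t` the factor `(t^r/r!)^{1-γ}` is at
most `e^r`, so `Φ_{r+1}(t) / Φ_r(t)^2 ≤ e^r log t / ((r+1) Φ_r(t))`, which tends to `0` as soon as
`Φ_r` grows faster than `log t`.
-/

open Filter

open Real

theorem tsum_rpow_mul_rpow_le {ι : Type*} {f g : ι → ℝ} (hf : ∀ i, 0 ≤ f i) (hg : ∀ i, 0 ≤ g i)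
    (hfs : Summable f) (hgs : Summable g) {γ : ℝ} (hγ₀ : 0 < γ) (hγ₁ : γ < 1) :
    ∑' i, f i ^ γ * g i ^ (1 - γ) ≤ (∑' i, f i) ^ γ * (∑' i, g i) ^ (1 - γ) := by
  have hγ₁' : 1 - γ ≠ 0 := by linarith
  have holder := inner_le_Lp_mul_Lq_tsum_of_nonneg (HolderConjugate.inv_one_sub_inv hγ₀ hγ₁)
    (fun i => rpow_nonneg (hf i) γ) (fun i => rpow_nonneg (hg i) (1 - γ))
  simp only [← rpow_mul (hf _), ← rpow_mul (hg _), mul_inv_cancel₀ hγ₀.ne',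
    mul_inv_cancel₀ hγ₁', rpow_one, one_div, inv_inv] at holder
  exact holder hfs hgs

theorem mul_exp_neg_mul_le {c : ℝ} (hc : 0 < c) (x : ℝ) : x * exp (-(c * x)) ≤ c⁻¹ := by
  rw [exp_neg, ← div_eq_mul_inv, div_le_iff₀ (exp_pos _), inv_mul_eq_div, le_div_iff₀ hc]
  linarith [add_one_le_exp (c * x)]

section Summability

variable {ι : Type*} {p : ι → ℝ}

theorem le_one_of_tsum_le_one (hp : ∀ j, 0 ≤ p j) (hsum : Summable p) (hle : ∑' j, p j ≤ 1)
    (j : ι) : p j ≤ 1 :=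
  (hsum.le_tsum j fun i _ => hp i).trans hle

theorem pow_le_self_of_tsum_le_one (hp : ∀ j, 0 ≤ p j) (hsum : Summable p)
    (hle : ∑' j, p j ≤ 1) {s : ℕ} (hs : 1 ≤ s) (j : ι) : p j ^ s ≤ p j :=
  pow_le_of_le_one (hp j) (le_one_of_tsum_le_one hp hsum hle j) (by omega)

theorem summable_pow_of_tsum_le_one (hp : ∀ j, 0 ≤ p j) (hsum : Summable p)
    (hle : ∑' j, p j ≤ 1) {s : ℕ} (hs : 1 ≤ s) : Summable fun j => p j ^ s :=
  hsum.of_nonneg_of_le (fun j => pow_nonneg (hp j) s) (pow_le_self_of_tsum_le_one hp hsum hle hs)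

theorem tsum_pow_le_one (hp : ∀ j, 0 ≤ p j) (hsum : Summable p)
    (hle : ∑' j, p j ≤ 1) {s : ℕ} (hs : 1 ≤ s) : ∑' j, p j ^ s ≤ 1 :=
  (Summable.tsum_le_tsum (pow_le_self_of_tsum_le_one hp hsum hle hs)
    (summable_pow_of_tsum_le_one hp hsum hle hs) hsum).trans hle

theorem summable_exp_mul_pow (hp : ∀ j, 0 ≤ p j) (hsum : Summable p)
    (hle : ∑' j, p j ≤ 1) {t : ℝ} (ht : 0 ≤ t) {s : ℕ} (hs : 1 ≤ s) :
    Summable fun j => exp (-t * p j) * p j ^ s :=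
  (summable_pow_of_tsum_le_one hp hsum hle hs).of_nonneg_of_le
    (fun j => by have := hp j; positivity)
    fun j => mul_le_of_le_one_left (pow_nonneg (hp j) s)
      (exp_le_one_iff.mpr (by nlinarith [hp j]))

end Summability

section Phi

variable {p : ℕ → ℝ}

theorem Phi_nonneg (hp : ∀ j, 0 ≤ p j) (r : ℕ) {t : ℝ} (ht : 0 ≤ t) : 0 ≤ Phi p r t :=
  mul_nonneg (by positivity) (tsum_nonneg fun j => by have := hp j; positivity)

theorem Phi_succ_le_Phi_mul (hp : ∀ j, 0 ≤ p j) (hsum : Summable p) (hle : ∑' j, p j ≤ 1)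
    {r : ℕ} (hr : 1 ≤ r) {t γ : ℝ} (ht : 0 < t) (hγ₀ : 0 < γ) (hγ₁ : γ < 1) :
    Phi p (r + 1) t ≤ Phi p r (γ * t) / ((r + 1) * γ ^ r * (1 - γ)) := by
  have hc : 0 < (1 - γ) * t := mul_pos (by linarith) ht
  have pointwise (j : ℕ) : exp (-t * p j) * p j ^ (r + 1) ≤
      exp (-(γ * t) * p j) * p j ^ r * ((1 - γ) * t)⁻¹ := calc
    exp (-t * p j) * p j ^ (r + 1)
        = exp (-(γ * t) * p j) * p j ^ r * (p j * exp (-((1 - γ) * t * p j))) := by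
      rw [show -t * p j = -(γ * t) * p j + -((1 - γ) * t * p j) by ring, exp_add, pow_succ]
      ring
    _ ≤ exp (-(γ * t) * p j) * p j ^ r * ((1 - γ) * t)⁻¹ := by
      have := hp j
      gcongr
      exact mul_exp_neg_mul_le hc (p j)
  have htsum := Summable.tsum_le_tsum pointwise
    (summable_exp_mul_pow hp hsum hle ht.le (by omega))
    ((summable_exp_mul_pow hp hsum hle (by positivity) hr).mul_right _)
  rw [tsum_mul_right] at htsum
  calc Phi p (r + 1) t
      ≤ t ^ (r + 1) / (r + 1).factorial *
          ((∑' j, exp (-(γ * t) * p j) * p j ^ r) * ((1 - γ) * t)⁻¹) := by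
        unfold Phi; gcongr
    _ = Phi p r (γ * t) / ((r + 1) * γ ^ r * (1 - γ)) := by
        unfold Phi
        rw [Nat.factorial_succ]
        have : 1 - γ ≠ 0 := by linarith
        push_cast
        field_simp
        ring

theorem Phi_mul_le (hp : ∀ j, 0 ≤ p j) (hsum : Summable p) (hle : ∑' j, p j ≤ 1)
    {r : ℕ} (hr : 1 ≤ r) {t γ : ℝ} (ht : 0 ≤ t) (hγ₀ : 0 < γ) (hγ₁ : γ < 1) :
    Phi p r (γ * t) ≤ γ ^ r * (t ^ r / r.factorial) ^ (1 - γ) * Phi p r t ^ γ := by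
  set S := ∑' j, exp (-t * p j) * p j ^ r
  have hS : 0 ≤ S := tsum_nonneg fun j => by have := hp j; positivity
  have interpolate (j : ℕ) : exp (-(γ * t) * p j) * p j ^ r =
      (exp (-t * p j) * p j ^ r) ^ γ * (p j ^ r) ^ (1 - γ) := by
    have := pow_nonneg (hp j) r
    rw [mul_rpow (exp_nonneg _) this, ← exp_mul, mul_assoc, ← rpow_add_of_nonneg this hγ₀.le
      (by linarith), add_sub_cancel, rpow_one]
    ring_nf
  have holder : ∑' j, exp (-(γ * t) * p j) * p j ^ r ≤ S ^ γ := calc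
    ∑' j, exp (-(γ * t) * p j) * p j ^ r
        = ∑' j, (exp (-t * p j) * p j ^ r) ^ γ * (p j ^ r) ^ (1 - γ) := tsum_congr interpolate
    _ ≤ S ^ γ * (∑' j, p j ^ r) ^ (1 - γ) :=
        tsum_rpow_mul_rpow_le (fun j => by have := hp j; positivity)
          (fun j => pow_nonneg (hp j) r) (summable_exp_mul_pow hp hsum hle ht hr)
          (summable_pow_of_tsum_le_one hp hsum hle hr) hγ₀ hγ₁
    _ ≤ S ^ γ := mul_le_of_le_one_right (rpow_nonneg hS γ)
        (rpow_le_one (tsum_nonneg fun j => pow_nonneg (hp j) r) (tsum_pow_le_one hp hsum hle hr)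
          (by linarith))
  have ha : 0 ≤ t ^ r / r.factorial := by positivity
  calc Phi p r (γ * t) ≤ (γ * t) ^ r / r.factorial * S ^ γ := by unfold Phi; gcongr
    _ = γ ^ r * ((t ^ r / r.factorial) ^ (1 - γ) * (t ^ r / r.factorial) ^ γ) * S ^ γ := by
        rw [← rpow_add_of_nonneg ha (by linarith) hγ₀.le, sub_add_cancel, rpow_one]
        ring
    _ = γ ^ r * (t ^ r / r.factorial) ^ (1 - γ) * Phi p r t ^ γ := by
        rw [Phi, mul_rpow ha hS]
        ring

theorem Phi_succ_le (hp : ∀ j, 0 ≤ p j) (hsum : Summable p) (hle : ∑' j, p j ≤ 1)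
    {r : ℕ} (hr : 1 ≤ r) {t γ : ℝ} (ht : 0 < t) (hγ₀ : 0 < γ) (hγ₁ : γ < 1) :
    Phi p (r + 1) t ≤ (t ^ r / r.factorial) ^ (1 - γ) * Phi p r t ^ γ / ((r + 1) * (1 - γ)) := by
  have hγr : 0 < γ ^ r := pow_pos hγ₀ r
  have : 0 < 1 - γ := by linarith
  calc Phi p (r + 1) t ≤ Phi p r (γ * t) / ((r + 1) * γ ^ r * (1 - γ)) :=
        Phi_succ_le_Phi_mul hp hsum hle hr ht hγ₀ hγ₁
    _ ≤ γ ^ r * (t ^ r / r.factorial) ^ (1 - γ) * Phi p r t ^ γ /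
          ((r + 1) * γ ^ r * (1 - γ)) := by
        gcongr
        exact Phi_mul_le hp hsum hle hr ht.le hγ₀ hγ₁
    _ = (t ^ r / r.factorial) ^ (1 - γ) * Phi p r t ^ γ / ((r + 1) * (1 - γ)) := by
        field_simp

theorem Phi_succ_div_sq_le (hp : ∀ j, 0 ≤ p j) (hsum : Summable p) (hle : ∑' j, p j ≤ 1)
    {r : ℕ} (hr : 1 ≤ r) {t : ℝ} (ht : exp 1 < t) (hΦ : 1 ≤ Phi p r t) :
    Phi p (r + 1) t / Phi p r t ^ 2 ≤ exp r * log t / ((r + 1) * Phi p r t) := by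
  have ht₀ : 0 < t := (exp_pos 1).trans ht
  set L := log t
  have hL : 1 < L := (lt_log_iff_exp_lt ht₀).mpr ht
  have hL₀ : 0 < L := one_pos.trans hL
  have hγ₀ : 0 < 1 - L⁻¹ := sub_pos.mpr (inv_lt_one_of_one_lt₀ hL)
  have hγ₁ : 1 - L⁻¹ < 1 := sub_lt_self 1 (inv_pos.mpr hL₀)
  have key := Phi_succ_le hp hsum hle hr ht₀ hγ₀ hγ₁
  rw [sub_sub_cancel] at key
  have hfactor : (t ^ r / r.factorial) ^ L⁻¹ ≤ exp r := calc
    (t ^ r / r.factorial) ^ L⁻¹ ≤ (t ^ r) ^ L⁻¹ := by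
        gcongr
        exact div_le_self (by positivity) (by exact_mod_cast r.factorial_pos)
    _ = exp r := by
        rw [rpow_def_of_pos (by positivity), log_pow, ← div_eq_mul_inv,
          mul_div_cancel_right₀ _ hL₀.ne']
  have hpow : Phi p r t ^ (1 - L⁻¹) ≤ Phi p r t :=
    (rpow_le_rpow_of_exponent_le hΦ hγ₁.le).trans_eq (rpow_one _)
  have hΦ₀ : 0 < Phi p r t := one_pos.trans_le hΦ
  calc Phi p (r + 1) t / Phi p r t ^ 2
      ≤ exp r * Phi p r t / ((r + 1) * L⁻¹) / Phi p r t ^ 2 := by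
        gcongr
        exact key.trans (by gcongr)
    _ = exp r * L / ((r + 1) * Phi p r t) := by
        field_simp

theorem tendsto_Phi_succ_div_sq_of_tendsto_div_log (hp : ∀ j, 0 ≤ p j) (hsum : Summable p)
    (hle : ∑' j, p j ≤ 1) {r : ℕ} (hr : 1 ≤ r)
    (hΦ : Tendsto (fun t => Phi p r t / log t) atTop atTop) :
    Tendsto (fun t => Phi p (r + 1) t / Phi p r t ^ 2) atTop (nhds 0) := by
  have hbound : Tendsto (fun t => exp r / (r + 1) * (Phi p r t / log t)⁻¹) atTop (nhds 0) := by
    simpa using hΦ.inv_tendsto_atTop.const_mul (exp r / (r + 1))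
  refine squeeze_zero' ?_ ?_ hbound
  · filter_upwards [eventually_ge_atTop 0] with t ht
    exact div_nonneg (Phi_nonneg hp _ ht) (sq_nonneg _)
  · filter_upwards [eventually_gt_atTop (exp 1), hΦ.eventually_ge_atTop 1] with t ht hΦt
    have hlog : 1 < log t := (lt_log_iff_exp_lt ((exp_pos 1).trans ht)).mpr ht
    have hΦ₁ : 1 ≤ Phi p r t := by
      rw [le_div_iff₀ (one_pos.trans hlog)] at hΦt
      linarith
    refine (Phi_succ_div_sq_le hp hsum hle hr ht hΦ₁).trans_eq ?_
    field_simp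

end Phi

theorem stmt_10 (p : ℕ → ℝ) (hp : ∀ j, 0 < p j) (hsum : Summable p)
    (h1 : ∑' j, p j = 1) (r : ℕ) (hr : 1 ≤ r) (g : ℝ → ℝ)
    (hgeq : ∀ᶠ t in atTop, Phi p r t = g t * Real.log t)
    (hg : Tendsto g atTop atTop) :
    Tendsto (fun t => Phi p (r + 1) t / (Phi p r t) ^ 2) atTop (nhds 0) := by
  have hΦ : Tendsto (fun t => Phi p r t / log t) atTop atTop := by
    refine hg.congr' ?_
    filter_upwards [hgeq, eventually_gt_atTop 1] with t hgt ht
    rw [hgt, mul_div_cancel_right₀ _ (log_pos ht).ne']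
  exact tendsto_Phi_succ_div_sq_of_tendsto_div_log (fun j => (hp j).le) hsum h1.le hr hΦ
end

section
/- Let X₁, X₂, … be independent Poisson processes where X_j has rate p_j, with p_j > 0 and ∑_j p_j = 1. For r ≥ 1 let β_{jr} be the r-th arrival time of X_j, and for t₀, h > 0 let λ_r = ∑_j P[β_{jr} ∈ (t₀, t₀+h]]. Then ∑_j P[t₀ ≤ β_{jr} < β_{j,r+1} ≤ t₀+h] = λ_r − (Φ_r(t₀+h)/(t₀+h)^r)((t₀+h)^r − t₀^r), where Φ_r(t) = (t^r/r!) ∑_j e^{-t p_j} p_j^r. -/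
/-- The probability that box `j` receives its `r`-th ball inside the time window
`(t₀, t₀+h]` and at least one further ball before time `t₀+h`, expressed through the
Gamma density of the `r`-th arrival time, sums over `j` to `λ_r` minus the stated term. -/
theorem stmt_13 (p : ℕ → ℝ) (hp : ∀ j, 0 < p j) (hsum : Summable p)
    (h1 : ∑' j, p j = 1) (r : ℕ) (hr : 1 ≤ r) (t₀ h : ℝ) (ht₀ : 0 < t₀) (hh : 0 < h) :
    (∑' j, ∫ t in t₀..(t₀ + h),
        Real.exp (-t * p j) * (t * p j) ^ (r - 1) / (Nat.factorial (r - 1)) * p j *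
          (1 - Real.exp (-(t₀ + h - t) * p j)))
      = (∑' j, ∫ t in t₀..(t₀ + h),
            Real.exp (-t * p j) * (t * p j) ^ (r - 1) / (Nat.factorial (r - 1)) * p j)
        - Phi p r (t₀ + h) / (t₀ + h) ^ r * ((t₀ + h) ^ r - t₀ ^ r) := by
  obtain ⟨m, rfl⟩ : ∃ m, r = m + 1 := ⟨r - 1, by omega⟩
  set T := t₀ + h with hTdef
  have hT : 0 < T := by positivity
  have htle : t₀ ≤ T := by simp [hTdef]; linarith
  have hp1 : ∀ j, p j ≤ 1 := by
    intro j
    rw [← h1]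
    exact Summable.le_tsum hsum j (fun i _ => (hp i).le)
  set C : ℝ := (T ^ (m + 1) - t₀ ^ (m + 1)) / ((m + 1) * Nat.factorial m) with hCdef
  -- per-j integral identity
  have key : ∀ j, (∫ t in t₀..T,
      Real.exp (-t * p j) * (t * p j) ^ (m + 1 - 1) / (Nat.factorial (m + 1 - 1)) * p j *
        (1 - Real.exp (-(T - t) * p j)))
    = (∫ t in t₀..T,
        Real.exp (-t * p j) * (t * p j) ^ (m + 1 - 1) / (Nat.factorial (m + 1 - 1)) * p j)
      - Real.exp (-T * p j) * p j ^ (m + 1) * C := by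
    intro j
    simp only [Nat.add_sub_cancel]
    have c1 : Continuous fun t : ℝ =>
        Real.exp (-t * p j) * (t * p j) ^ m / (Nat.factorial m) * p j := by
      continuity
    have c2 : Continuous fun t : ℝ =>
        Real.exp (-T * p j) * p j ^ (m + 1) / (Nat.factorial m) * t ^ m := by
      continuity
    have heq : ∀ t : ℝ,
        Real.exp (-t * p j) * (t * p j) ^ m / (Nat.factorial m) * p j *
          (1 - Real.exp (-(T - t) * p j))
        = Real.exp (-t * p j) * (t * p j) ^ m / (Nat.factorial m) * p j
          - Real.exp (-T * p j) * p j ^ (m + 1) / (Nat.factorial m) * t ^ m := by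
      intro t
      have hE : Real.exp (-t * p j) * Real.exp (-(T - t) * p j) = Real.exp (-T * p j) := by
        rw [← Real.exp_add]; congr 1; ring
      have goal2 : Real.exp (-t * p j) * (t * p j) ^ m / (Nat.factorial m) * p j *
          Real.exp (-(T - t) * p j)
          = Real.exp (-T * p j) * p j ^ (m + 1) / (Nat.factorial m) * t ^ m := by
        rw [mul_pow]
        linear_combination (t ^ m * p j ^ m * p j / (Nat.factorial m : ℝ)) * hE
      rw [mul_sub, mul_one, goal2]
    rw [intervalIntegral.integral_congr (g := fun t =>
        Real.exp (-t * p j) * (t * p j) ^ m / (Nat.factorial m) * p j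
          - Real.exp (-T * p j) * p j ^ (m + 1) / (Nat.factorial m) * t ^ m)
        (fun t _ => heq t)]
    rw [intervalIntegral.integral_sub (c1.intervalIntegrable _ _) (c2.intervalIntegrable _ _)]
    congr 1
    rw [intervalIntegral.integral_const_mul, integral_pow]
    rw [hCdef, ← div_div]
    push_cast
    ring
  -- summability of the plain integrals
  set a : ℕ → ℝ := fun j => ∫ t in t₀..T,
      Real.exp (-t * p j) * (t * p j) ^ (m + 1 - 1) / (Nat.factorial (m + 1 - 1)) * p j with hadef
  set b : ℕ → ℝ := fun j => Real.exp (-T * p j) * p j ^ (m + 1) * C with hbdef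
  have ha_nonneg : ∀ j, 0 ≤ a j := by
    intro j
    apply intervalIntegral.integral_nonneg htle
    intro t ht
    have h1 : 0 ≤ t := le_trans ht₀.le ht.1
    exact mul_nonneg (div_nonneg (mul_nonneg (Real.exp_pos _).le
      (pow_nonneg (mul_nonneg h1 (hp j).le) _)) (Nat.cast_nonneg _)) (hp j).le
  have ha_le : ∀ j, a j ≤ (T ^ m / (Nat.factorial m) * h) * p j := by
    intro j
    have c1 : Continuous fun t : ℝ =>
        Real.exp (-t * p j) * (t * p j) ^ m / (Nat.factorial m) * p j := by
      continuity
    have hle : ∀ t ∈ Set.Icc t₀ T,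
        Real.exp (-t * p j) * (t * p j) ^ m / (Nat.factorial m) * p j
          ≤ T ^ m / (Nat.factorial m) * p j := by
      intro t ht
      have h0t : 0 ≤ t := le_trans ht₀.le ht.1
      have he : Real.exp (-t * p j) ≤ 1 := by
        apply Real.exp_le_one_iff.mpr
        nlinarith [(hp j).le]
      have hpow : (t * p j) ^ m ≤ T ^ m := by
        apply pow_le_pow_left₀ (mul_nonneg h0t (hp j).le)
        nlinarith [(hp j).le, hp1 j, ht.2]
      have hfact : (0:ℝ) < (Nat.factorial m : ℝ) := Nat.cast_pos.mpr (Nat.factorial_pos m)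
      calc Real.exp (-t * p j) * (t * p j) ^ m / (Nat.factorial m) * p j
          ≤ 1 * T ^ m / (Nat.factorial m) * p j := by
            apply mul_le_mul_of_nonneg_right _ (hp j).le
            apply div_le_div_of_nonneg_right _ hfact.le
            · calc Real.exp (-t * p j) * (t * p j) ^ m ≤ 1 * (t * p j) ^ m := by
                    apply mul_le_mul_of_nonneg_right he
                      (pow_nonneg (mul_nonneg h0t (hp j).le) _)
                _ ≤ 1 * T ^ m := by simpa using hpow
        _ = T ^ m / (Nat.factorial m) * p j := by ring
    simp only [hadef, Nat.add_sub_cancel]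
    calc (∫ t in t₀..T, Real.exp (-t * p j) * (t * p j) ^ m / (Nat.factorial m) * p j)
        ≤ ∫ _ in t₀..T, T ^ m / (Nat.factorial m) * p j := by
          apply intervalIntegral.integral_mono_on htle (c1.intervalIntegrable _ _)
            (intervalIntegrable_const) hle
      _ = (T ^ m / (Nat.factorial m) * h) * p j := by
          rw [intervalIntegral.integral_const, smul_eq_mul, hTdef]
          ring
  have ha_summable : Summable a :=
    Summable.of_nonneg_of_le ha_nonneg ha_le (hsum.mul_left _)
  have hC_nonneg : 0 ≤ C := by
    rw [hCdef]
    have h2 : (0:ℝ) ≤ ((m:ℝ) + 1) * (Nat.factorial m : ℝ) :=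
      mul_nonneg (by positivity) (Nat.cast_nonneg _)
    apply div_nonneg _ h2
    have := pow_le_pow_left₀ ht₀.le htle (m + 1)
    linarith
  have hb_summable : Summable b := by
    apply Summable.of_nonneg_of_le (fun j =>
      mul_nonneg (mul_nonneg (Real.exp_pos _).le (pow_nonneg (hp j).le _)) hC_nonneg)
      (fun j => ?_) (hsum.mul_right C)
    show Real.exp (-T * p j) * p j ^ (m + 1) * C ≤ p j * C
    have he : Real.exp (-T * p j) ≤ 1 := by
      apply Real.exp_le_one_iff.mpr
      nlinarith [(hp j).le]
    have hpow : p j ^ (m + 1) ≤ p j := by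
      calc p j ^ (m + 1) ≤ p j ^ 1 := pow_le_pow_of_le_one (hp j).le (hp1 j) (by omega)
        _ = p j := pow_one _
    calc Real.exp (-T * p j) * p j ^ (m + 1) * C ≤ 1 * p j * C := by
          apply mul_le_mul_of_nonneg_right _ hC_nonneg
          calc Real.exp (-T * p j) * p j ^ (m + 1) ≤ 1 * p j ^ (m + 1) :=
                mul_le_mul_of_nonneg_right he (pow_nonneg (hp j).le _)
            _ ≤ 1 * p j := by simpa using hpow
      _ = p j * C := by ring
  -- put it together
  have hLHS : (∑' j, ∫ t in t₀..T,
      Real.exp (-t * p j) * (t * p j) ^ (m + 1 - 1) / (Nat.factorial (m + 1 - 1)) * p j *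
        (1 - Real.exp (-(T - t) * p j))) = (∑' j, a j) - (∑' j, b j) := by
    rw [← Summable.tsum_sub ha_summable hb_summable]
    exact tsum_congr key
  rw [hLHS]
  congr 1
  -- Phi term
  rw [hbdef]
  simp only
  rw [tsum_mul_right]
  rw [Phi]
  have hTne : (T : ℝ) ^ (m + 1) ≠ 0 := pow_ne_zero _ hT.ne'
  have hfact : (Nat.factorial (m + 1) : ℝ) = (m + 1) * Nat.factorial m := by
    push_cast [Nat.factorial_succ]; ring
  rw [hCdef, hfact]
  have hfm : (0:ℝ) < (Nat.factorial m : ℝ) := by positivity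
  field_simp
end
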